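/- arXiv:1508.01917 — 8 statements merged into one kernel-verified Lean document; each statement's English description precedes it below -/
import Mathlib

section
/- Let M be a compact Hausdorff topological space equipped with a partial order ⪯ making it a toposet. Then the set I(M) of continuous isotone functions f : M → ℝ, regarded as self-adjoint elements of the unital C*-algebra C(M,ℂ) of continuous complex-valued functions on M, is an isocone of C(M,ℂ): it is nonempty, stable under composition with continuous non-decreasing functions ℝ → ℝ, stable under sums, closed in the uniform norm, and separates the states of C(M,ℂ). -/
open scoped ComplexOrder

/-- A state on a unital C*-algebra: a linear functional with `φ 1 = 1` and `φ (a* a) ≥ 0`. -/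
def IsState {A : Type*} [CStarAlgebra A] (φ : A →ₗ[ℂ] ℂ) : Prop :=
  φ 1 = 1 ∧ ∀ a : A, 0 ≤ φ (star a * a)

/-- An isocone of a unital C*-algebra: a nonempty set of self-adjoint elements, stable under
continuous non-decreasing functional calculus, stable under sums, norm-closed, and separating
the states. -/
def IsIsocone {A : Type*} [CStarAlgebra A] (I : Set A) : Prop :=
  I.Nonempty ∧
  (∀ a ∈ I, IsSelfAdjoint a) ∧
  (∀ a ∈ I, ∀ f : ℝ → ℝ, Continuous f → Monotone f → cfc f a ∈ I) ∧
  (∀ a ∈ I, ∀ b ∈ I, a + b ∈ I) ∧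
  IsClosed I ∧
  (∀ φ ψ : A →ₗ[ℂ] ℂ, IsState φ → IsState ψ → (∀ a ∈ I, φ a = ψ a) → φ = ψ)

/-!
All closure properties except state separation are pointwise facts about real functions. States
are positive, hence continuous, functionals, so two states agreeing on the isotone functions agree
on the closure of their real linear span. That span is closed under products, since for bounded
isotone `u`, `v` the product `(u + ‖u‖)(v + ‖v‖)` of nonnegative isotone functions is isotone. In a
toposet the isotone functions separate points, so by Stone–Weierstrass the span is dense in
`C(M, ℝ)`, and splitting into real and imaginary parts gives agreement on all of `C(M, ℂ)`.
-/

open Complex Submodule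
open scoped Pointwise

lemma LinearMap.continuous_of_map_star_mul_self_nonneg {A : Type*} [CStarAlgebra A]
    [PartialOrder A] [StarOrderedRing A] {φ : A →ₗ[ℂ] ℂ} (hφ : ∀ a, 0 ≤ φ (star a * a)) :
    Continuous φ :=
  map_continuous <| PositiveLinearMap.mk₀ φ fun a ha ↦ by
    obtain ⟨b, rfl⟩ := CStarAlgebra.nonneg_iff_eq_star_mul_self.mp ha
    exact hφ b

lemma exists_monotone_ne_of_ne {X : Type*} [TopologicalSpace X] [PartialOrder X]
    (h : ∀ x y : X, (∀ f : X → ℝ, Continuous f → Monotone f → f x ≤ f y) → x ≤ y)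
    {x y : X} (hxy : x ≠ y) : ∃ f : C(X, ℝ), Monotone f ∧ f x ≠ f y := by
  have of_not_le : ∀ a b : X, ¬ a ≤ b → ∃ f : C(X, ℝ), Monotone f ∧ f a ≠ f b := by
    intro a b hab
    contrapose! hab
    exact h a b fun f hf hmono ↦ (hab ⟨f, hf⟩ hmono).le
  by_cases hle : x ≤ y
  · obtain ⟨f, hf, hne⟩ := of_not_le y x fun hyx ↦ hxy (le_antisymm hle hyx)
    exact ⟨f, hf, hne.symm⟩
  · exact of_not_le x y hle

namespace ContinuousMap

section Complexification

variable {X : Type*} [TopologicalSpace X]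

lemma setOf_exists_ofReal_eq_image (P : (X → ℝ) → Prop) :
    {g : C(X, ℂ) | ∃ f : X → ℝ, Continuous f ∧ P f ∧ ∀ x, g x = (f x : ℂ)} =
      ofRealCLM.compLeftContinuous ℝ X '' {u : C(X, ℝ) | P u} := by
  ext g
  constructor
  · rintro ⟨f, hf, hP, hg⟩
    exact ⟨⟨f, hf⟩, hP, ext fun x ↦ (hg x).symm⟩
  · rintro ⟨u, hP, rfl⟩
    exact ⟨u, u.continuous, hP, fun _ ↦ rfl⟩

lemma isSelfAdjoint_ofReal_comp (u : C(X, ℝ)) :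
    IsSelfAdjoint (ofRealCLM.compLeftContinuous ℝ X u) := by
  ext x
  simp [conj_ofReal]

lemma linearMap_ext_ofReal_comp {φ ψ : C(X, ℂ) →ₗ[ℂ] ℂ}
    (h : ∀ u : C(X, ℝ), φ (ofRealCLM.compLeftContinuous ℝ X u) =
      ψ (ofRealCLM.compLeftContinuous ℝ X u)) : φ = ψ := by
  ext a
  have ha : a = ofRealCLM.compLeftContinuous ℝ X (reCLM.compLeftContinuous ℝ X a) +
      I • ofRealCLM.compLeftContinuous ℝ X (imCLM.compLeftContinuous ℝ X a) := by
    ext x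
    simp [mul_comm I]
  rw [ha, map_add, map_add, map_smul, map_smul, h, h]

lemma linearMap_ext_of_dense_span {φ ψ : C(X, ℂ) →ₗ[ℂ] ℂ}
    (hφ : Continuous φ) (hψ : Continuous ψ) {S : Set C(X, ℝ)}
    (hS : Dense (span ℝ S : Set C(X, ℝ)))
    (h : ∀ u ∈ S, φ (ofRealCLM.compLeftContinuous ℝ X u) =
      ψ (ofRealCLM.compLeftContinuous ℝ X u)) : φ = ψ := by
  let Φ : C(X, ℝ) →L[ℝ] ℂ :=
    (⟨φ.restrictScalars ℝ, hφ⟩ : C(X, ℂ) →L[ℝ] ℂ).comp (ofRealCLM.compLeftContinuous ℝ X)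
  let Ψ : C(X, ℝ) →L[ℝ] ℂ :=
    (⟨ψ.restrictScalars ℝ, hψ⟩ : C(X, ℂ) →L[ℝ] ℂ).comp (ofRealCLM.compLeftContinuous ℝ X)
  have hΦΨ : Φ = Ψ := ContinuousLinearMap.ext_on hS h
  exact linearMap_ext_ofReal_comp fun u ↦ congr($hΦΨ u)

variable [CompactSpace X]

lemma isometry_ofReal_comp : Isometry (ofRealCLM.compLeftContinuous ℝ X) :=
  AddMonoidHomClass.isometry_of_norm _ fun u ↦ by simp [norm_eq_iSup_norm]

/-- Instance search does not find `IsSelfAdjoint.instContinuousFunctionalCalculus` for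
`C(X, ℂ)`: its instance arguments match those of `C(X, ℂ)` only after unfolding. -/
noncomputable instance : ContinuousFunctionalCalculus ℝ C(X, ℂ) IsSelfAdjoint :=
  IsSelfAdjoint.instContinuousFunctionalCalculus

lemma cfc_ofReal_comp (g : ℝ → ℝ) (hg : Continuous g) (u : C(X, ℝ)) :
    cfc g (ofRealCLM.compLeftContinuous ℝ X u) =
      ofRealCLM.compLeftContinuous ℝ X ((ContinuousMap.mk g hg).comp u) := by
  ext x
  have hx : cfc g (ofRealCLM.compLeftContinuous ℝ X u) x = cfc g (algebraMap ℝ ℂ (u x)) :=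
    (evalStarAlgHom ℂ ℂ x).map_cfc g _ (ha := isSelfAdjoint_ofReal_comp u)
      (hφa := (isSelfAdjoint_ofReal_comp u).map (evalStarAlgHom ℂ ℂ x))
  exact hx.trans (cfc_algebraMap (u x) g)

end Complexification

section MonotoneSpan

variable {X : Type*} [TopologicalSpace X] [CompactSpace X] [Preorder X]

lemma mul_mem_span_setOf_monotone {u v : C(X, ℝ)} (hu : Monotone u) (hv : Monotone v) :
    u * v ∈ span ℝ {w : C(X, ℝ) | Monotone w} := by
  have shift_nonneg : ∀ (w : C(X, ℝ)) x, 0 ≤ w x + ‖w‖ := fun w x ↦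
    neg_le_iff_add_nonneg.mp (abs_le.mp (w.norm_coe_le_norm x)).1
  have hprod : Monotone ⇑((u + algebraMap ℝ _ ‖u‖) * (v + algebraMap ℝ _ ‖v‖)) :=
    (hu.add_const _).mul (hv.add_const _) (shift_nonneg u) (shift_nonneg v)
  have hone : Monotone ⇑(1 : C(X, ℝ)) := monotone_const
  have hexpand : u * v = (u + algebraMap ℝ _ ‖u‖) * (v + algebraMap ℝ _ ‖v‖) -
      (‖v‖ • u + ‖u‖ • v + (‖u‖ * ‖v‖) • 1) := by
    ext x
    simp only [mul_apply, sub_apply, add_apply, smul_apply, algebraMap_apply, one_apply,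
      smul_eq_mul, mul_one]
    ring
  rw [hexpand]
  exact sub_mem (subset_span hprod) (add_mem (add_mem (smul_mem _ _ (subset_span hu))
    (smul_mem _ _ (subset_span hv))) (smul_mem _ _ (subset_span hone)))

variable (X) in
noncomputable def monotoneSpan : Subalgebra ℝ C(X, ℝ) :=
  (span ℝ {w : C(X, ℝ) | Monotone w}).toSubalgebra (subset_span monotone_const)
    fun u v hu hv ↦ by
      have hsub : {w : C(X, ℝ) | Monotone w} * {w : C(X, ℝ) | Monotone w} ⊆
          (span ℝ {w : C(X, ℝ) | Monotone w} : Set C(X, ℝ)) := by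
        rintro _ ⟨u, hu, v, hv, rfl⟩
        exact mul_mem_span_setOf_monotone hu hv
      have huv := mul_mem_mul hu hv
      rw [span_mul_span] at huv
      exact span_le.mpr hsub huv

lemma dense_span_setOf_monotone
    (hsep : ∀ x y : X, x ≠ y → ∃ f : C(X, ℝ), Monotone f ∧ f x ≠ f y) :
    Dense (span ℝ {w : C(X, ℝ) | Monotone w} : Set C(X, ℝ)) := by
  have hpoints : (monotoneSpan X).SeparatesPoints := fun x y hxy ↦ by
    obtain ⟨f, hf, hfxy⟩ := hsep x y hxy
    exact ⟨f, ⟨f, subset_span hf, rfl⟩, hfxy⟩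
  exact dense_iff_topologicalClosure_eq_top.mpr <| congr_arg Subalgebra.toSubmodule <|
    subalgebra_topologicalClosure_eq_top_of_separatesPoints _ hpoints

end MonotoneSpan

end ContinuousMap

open ContinuousMap

theorem isocone_of_compact_toposet_general (M : Type*) [TopologicalSpace M] [CompactSpace M]
    [PartialOrder M]
    (htoposet : ∀ x y : M, x ≤ y ↔
      ∀ f : M → ℝ, Continuous f → Monotone f → f x ≤ f y) :
    IsIsocone {g : C(M, ℂ) |
      ∃ f : M → ℝ, Continuous f ∧ Monotone f ∧ ∀ x : M, g x = (f x : ℂ)} := by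
  rw [setOf_exists_ofReal_eq_image]
  refine ⟨⟨_, 0, monotone_const, rfl⟩, ?_, ?_, ?_, ?_, ?_⟩
  · rintro _ ⟨u, -, rfl⟩
    exact isSelfAdjoint_ofReal_comp u
  · rintro _ ⟨u, hu, rfl⟩ g hg hgmono
    exact ⟨_, hgmono.comp hu, (cfc_ofReal_comp g hg u).symm⟩
  · rintro _ ⟨u, hu, rfl⟩ _ ⟨v, hv, rfl⟩
    exact ⟨u + v, hu.add hv, map_add _ u v⟩
  · exact isometry_ofReal_comp.isClosedEmbedding.isClosedMap _
      (isClosed_monotone.preimage continuous_coeFun)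
  · intro φ ψ hφ hψ hφψ
    have hdense := dense_span_setOf_monotone fun x y ↦
      exists_monotone_ne_of_ne fun x y ↦ (htoposet x y).2
    exact linearMap_ext_of_dense_span
      (LinearMap.continuous_of_map_star_mul_self_nonneg hφ.2)
      (LinearMap.continuous_of_map_star_mul_self_nonneg hψ.2) hdense
      fun u hu ↦ hφψ _ ⟨u, hu, rfl⟩

/-- if `M` is a compact Hausdorff toposet, the continuous real-valued isotone
functions on `M`, regarded as self-adjoint elements of `C(M, ℂ)`, form an isocone. -/
theorem isocone_of_compact_toposet (M : Type*) [TopologicalSpace M] [CompactSpace M]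
    [T2Space M] [PartialOrder M]
    (htoposet : ∀ x y : M, x ≤ y ↔
      ∀ f : M → ℝ, Continuous f → Monotone f → f x ≤ f y) :
    IsIsocone {g : C(M, ℂ) |
      ∃ f : M → ℝ, Continuous f ∧ Monotone f ∧ ∀ x : M, g x = (f x : ℂ)} :=
  isocone_of_compact_toposet_general M htoposet
end

section
/- Let A be a commutative unital C*-algebra and I an isocone of A. Define a relation ⪯ on the character space X(A) (the set of nonzero algebra homomorphisms χ : A → ℂ with the weak-* topology) by χ₁ ⪯ χ₂ if and only if χ₁(a) ≤ χ₂(a) for all a ∈ I (these values are real since each a ∈ I is self-adjoint). Then: (a) ⪯ is a partial order making the compact Hausdorff space X(A) a toposet; and (b) I is exactly the set of self-adjoint elements a ∈ A whose Gelfand transform â : X(A) → ℝ, â(χ) = χ(a), is isotone for ⪯. -/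
/-!
Through the Gelfand transform, the self-adjoint part of `A` is `C(X, ℝ)` for the compact space `X`
of characters, and `I` becomes a closed set `L ⊆ C(X, ℝ)` stable under sums and under
post-composition with continuous monotone maps. Such an `L` is a lattice: `f ⊔ g` is the uniform
limit of `log (exp (n f) + exp (n g)) / n`, and `f ⊓ g = -((-f) ⊔ (-g))` where `-L` is again of
this kind. If `g` is isotone for the order defined by `L`, then `g x < g y` forces `f x < f y` for
some `f ∈ L`, and a monotone affine map sends `f` to a function of `L` agreeing with `g` at `x` and
`y`; the Kakutani–Krein form of Stone–Weierstrass then puts `g` in the closure of `L`, that is in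
`L`. Antisymmetry of the order is the separation of states by `I`, characters being states.
-/

open scoped ComplexOrder

open scoped Pointwise

namespace Real

theorem max_le_log_exp_add_exp (x y : ℝ) : max x y ≤ log (exp x + exp y) := by
  rw [le_log_iff_exp_le (by positivity)]
  rcases le_total x y with h | h
  · rw [max_eq_right h]; linarith [exp_pos x]
  · rw [max_eq_left h]; linarith [exp_pos y]

theorem log_exp_add_exp_le_max_add_log_two (x y : ℝ) :
    log (exp x + exp y) ≤ max x y + log 2 := by
  rw [log_le_iff_le_exp (by positivity), exp_add, exp_log two_pos]
  have := exp_le_exp.2 (le_max_left x y)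
  have := exp_le_exp.2 (le_max_right x y)
  linarith

theorem abs_log_exp_add_exp_div_sub_max_le {n : ℝ} (hn : 0 < n) (x y : ℝ) :
    |log (exp (n * x) + exp (n * y)) / n - max x y| ≤ log 2 / n := by
  have hmax : max (n * x) (n * y) = n * max x y := (mul_max_of_nonneg x y hn.le).symm
  have lower := max_le_log_exp_add_exp (n * x) (n * y)
  have upper := log_exp_add_exp_le_max_add_log_two (n * x) (n * y)
  rw [hmax] at lower upper
  rw [show log (exp (n * x) + exp (n * y)) / n - max x y
      = (log (exp (n * x) + exp (n * y)) - n * max x y) / n by field_simp,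
    abs_div, abs_of_pos hn]
  gcongr
  rw [abs_le]
  constructor <;> linarith [log_pos one_lt_two]

end Real

namespace ContinuousMap

variable {X : Type*} [TopologicalSpace X]

theorem exists_mem_forall_lt_of_infClosed [CompactSpace X] [Nonempty X] {L : Set C(X, ℝ)}
    (hL : InfClosed L) {p : X → ℝ} (hp : Continuous p)
    (h : ∀ x, ∃ f ∈ L, f x < p x) : ∃ f ∈ L, ∀ x, f x < p x := by
  choose f hfL hf using h
  obtain ⟨s, hs⟩ := CompactSpace.elim_nhds_subcover (fun x => {z | f x z < p z})
    fun x => (isOpen_lt (f x).continuous hp).mem_nhds (hf x)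
  have hs_ne : s.Nonempty := Set.nonempty_of_union_eq_top_of_nonempty _ _ ‹_› hs
  refine ⟨s.inf' hs_ne f, hL.finsetInf'_mem hs_ne fun x _ => hfL x, fun z => ?_⟩
  simpa only [inf'_apply, Finset.inf'_lt_iff, Set.mem_ofPred_eq, Finset.mem_coe] using
    Set.exists_set_mem_of_union_eq_top _ _ hs z

theorem exists_mem_forall_gt_of_supClosed [CompactSpace X] [Nonempty X] {L : Set C(X, ℝ)}
    (hL : SupClosed L) {p : X → ℝ} (hp : Continuous p)
    (h : ∀ x, ∃ f ∈ L, p x < f x) : ∃ f ∈ L, ∀ x, p x < f x := by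
  choose f hfL hf using h
  obtain ⟨s, hs⟩ := CompactSpace.elim_nhds_subcover (fun x => {z | p z < f x z})
    fun x => (isOpen_lt hp (f x).continuous).mem_nhds (hf x)
  have hs_ne : s.Nonempty := Set.nonempty_of_union_eq_top_of_nonempty _ _ ‹_› hs
  refine ⟨s.sup' hs_ne f, hL.finsetSup'_mem hs_ne fun x _ => hfL x, fun z => ?_⟩
  simpa only [sup'_apply, Finset.lt_sup'_iff, Set.mem_ofPred_eq, Finset.mem_coe] using
    Set.exists_set_mem_of_union_eq_top _ _ hs z

/-- The Kakutani–Krein argument of `ContinuousMap.sublattice_closure_eq_top`, for one function. -/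
theorem mem_closure_of_forall_exists_eq_eq [CompactSpace X] {L : Set C(X, ℝ)} (hL : L.Nonempty)
    (hinf : InfClosed L) (hsup : SupClosed L) {g : C(X, ℝ)}
    (hg : ∀ x y, ∃ f ∈ L, f x = g x ∧ f y = g y) : g ∈ closure L := by
  rcases isEmpty_or_nonempty X with hX | hX
  · obtain ⟨f, hf⟩ := hL
    exact subset_closure (Subsingleton.elim f g ▸ hf)
  rw [Metric.mem_closure_iff]
  intro ε hε
  have above : ∀ x, ∃ f ∈ L, f x < g x + ε ∧ ∀ z, g z - ε < f z := by
    intro x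
    obtain ⟨f, ⟨hfL, hfx⟩, hf⟩ := exists_mem_forall_gt_of_supClosed (L := {f ∈ L | f x = g x})
      (p := fun z => g z - ε)
      (fun f hf f' hf' => ⟨hsup hf.1 hf'.1, by simp [hf.2, hf'.2]⟩)
      (by fun_prop) fun y => by
        obtain ⟨f, hfL, hfx, hfy⟩ := hg x y
        exact ⟨f, ⟨hfL, hfx⟩, by linarith⟩
    exact ⟨f, hfL, by linarith, hf⟩
  obtain ⟨f, ⟨hfL, hf_lower⟩, hf_upper⟩ := exists_mem_forall_lt_of_infClosed
    (L := {f ∈ L | ∀ z, g z - ε < f z}) (p := fun z => g z + ε)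
    (fun f hf f' hf' => ⟨hinf hf.1 hf'.1, fun z => lt_min (hf.2 z) (hf'.2 z)⟩)
    (by fun_prop) fun x => by
      obtain ⟨f, hfL, hfx, hf⟩ := above x
      exact ⟨f, ⟨hfL, hf⟩, hfx⟩
  refine ⟨f, hfL, (dist_lt_iff hε).2 fun z => ?_⟩
  rw [Real.dist_eq, abs_sub_lt_iff]
  constructor <;> linarith [hf_lower z, hf_upper z]

structure IsMonotoneCalculusClosed (L : Set C(X, ℝ)) : Prop where
  add_mem : ∀ f ∈ L, ∀ g ∈ L, f + g ∈ L
  comp_mem : ∀ f ∈ L, ∀ φ : C(ℝ, ℝ), Monotone φ → φ.comp f ∈ L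
  isClosed : IsClosed L

namespace IsMonotoneCalculusClosed

variable {L : Set C(X, ℝ)}

theorem supClosed [CompactSpace X] (hL : IsMonotoneCalculusClosed L) : SupClosed L := by
  intro f hf g hg
  rw [← hL.isClosed.closure_eq, Metric.mem_closure_iff]
  intro ε hε
  obtain ⟨n, hn⟩ := exists_nat_gt (Real.log 2 / ε)
  have hn_pos : (0 : ℝ) < n := (div_pos (Real.log_pos one_lt_two) hε).trans hn
  let expn : C(ℝ, ℝ) := ⟨fun t => Real.exp (n * t), by fun_prop⟩
  have expn_mono : Monotone expn := fun s t hst =>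
    Real.exp_le_exp.2 (mul_le_mul_of_nonneg_left hst hn_pos.le)
  -- `δ` is a positive lower bound of `expn ∘ f`, below which `log` is cut off to stay monotone
  let δ := Real.exp (-(n * ‖f‖))
  let logn : C(ℝ, ℝ) := ⟨fun s => Real.log (max s δ) / n,
    ((continuous_id.max continuous_const).log fun _ =>
      (lt_max_of_lt_right (Real.exp_pos _)).ne').div_const _⟩
  have logn_mono : Monotone logn := fun s t hst =>
    div_le_div_of_nonneg_right
      (Real.log_le_log (lt_max_of_lt_right (Real.exp_pos _)) (max_le_max hst le_rfl)) hn_pos.le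
  refine ⟨logn.comp (expn.comp f + expn.comp g),
    hL.comp_mem _ (hL.add_mem _ (hL.comp_mem f hf expn expn_mono) _
      (hL.comp_mem g hg expn expn_mono)) logn logn_mono, (dist_lt_iff hε).2 fun z => ?_⟩
  have hδ : δ ≤ expn (f z) + expn (g z) := by
    have : -‖f‖ ≤ f z := neg_le_of_abs_le (f.norm_coe_le_norm z)
    have : δ ≤ expn (f z) := Real.exp_le_exp.2 (by nlinarith)
    linarith [show 0 < expn (g z) from Real.exp_pos _]
  have hval : logn.comp (expn.comp f + expn.comp g) z
      = Real.log (Real.exp (n * f z) + Real.exp (n * g z)) / n := by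
    simp only [comp_apply, add_apply, coe_mk, logn, max_eq_left hδ]
    rfl
  rw [hval, sup_apply, dist_comm, Real.dist_eq]
  calc _ ≤ Real.log 2 / n := Real.abs_log_exp_add_exp_div_sub_max_le hn_pos _ _
    _ < ε := (div_lt_iff₀ hn_pos).2 (by rwa [div_lt_iff₀ hε, mul_comm] at hn)

theorem neg (hL : IsMonotoneCalculusClosed L) : IsMonotoneCalculusClosed (-L) where
  add_mem f hf g hg := by
    rw [Set.mem_neg, neg_add]
    exact hL.add_mem _ hf _ hg
  comp_mem f hf φ hφ := by
    let ψ : C(ℝ, ℝ) := ⟨fun t => -φ (-t), by fun_prop⟩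
    have : -(φ.comp f) = ψ.comp (-f) := by ext z; simp [ψ]
    rw [Set.mem_neg, this]
    exact hL.comp_mem _ hf ψ fun s t hst => neg_le_neg (hφ (neg_le_neg hst))
  isClosed := hL.isClosed.neg

theorem infClosed [CompactSpace X] (hL : IsMonotoneCalculusClosed L) : InfClosed L := by
  intro f hf g hg
  have := hL.neg.supClosed (Set.neg_mem_neg.2 hf) (Set.neg_mem_neg.2 hg)
  rwa [Set.mem_neg, ← neg_inf, neg_neg] at this

theorem const_mem (hL : IsMonotoneCalculusClosed L) (hne : L.Nonempty) (c : ℝ) :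
    const X c ∈ L := by
  obtain ⟨f, hf⟩ := hne
  exact hL.comp_mem f hf (const ℝ c) monotone_const

theorem exists_eq_eq_of_le (hL : IsMonotoneCalculusClosed L) (hne : L.Nonempty) {g : C(X, ℝ)}
    (hg : ∀ x y, g x < g y → ∃ f ∈ L, f x < f y) {x y : X} (hxy : g x ≤ g y) :
    ∃ f ∈ L, f x = g x ∧ f y = g y := by
  rcases hxy.lt_or_eq with hlt | heq
  · obtain ⟨f, hfL, hf⟩ := hg x y hlt
    set α := (g y - g x) / (f y - f x)
    have hα : 0 ≤ α := div_nonneg (sub_nonneg.2 hlt.le) (sub_nonneg.2 hf.le)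
    let φ : C(ℝ, ℝ) := ⟨fun t => g x + α * (t - f x), by fun_prop⟩
    refine ⟨φ.comp f, hL.comp_mem f hfL φ fun s t hst => ?_, by simp [φ], ?_⟩
    · simp only [φ, coe_mk]; gcongr
    · simp only [φ, comp_apply, coe_mk, α]
      field_simp [(sub_pos.2 hf).ne']
      ring
  · exact ⟨const X (g x), hL.const_mem hne _, rfl, heq⟩

theorem mem_of_forall_lt [CompactSpace X] (hL : IsMonotoneCalculusClosed L) (hne : L.Nonempty)
    {g : C(X, ℝ)} (hg : ∀ x y, g x < g y → ∃ f ∈ L, f x < f y) : g ∈ L := by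
  rw [← hL.isClosed.closure_eq]
  refine mem_closure_of_forall_exists_eq_eq hne hL.infClosed hL.supClosed fun x y => ?_
  rcases le_total (g x) (g y) with hxy | hyx
  · exact hL.exists_eq_eq_of_le hne hg hxy
  · obtain ⟨f, hfL, hfy, hfx⟩ := hL.exists_eq_eq_of_le hne hg hyx
    exact ⟨f, hfL, hfx, hfy⟩

end IsMonotoneCalculusClosed

end ContinuousMap

open WeakDual ContinuousMap

section CStarAlgebra

variable {A : Type*} [CStarAlgebra A]

theorem isState_characterSpace (χ : characterSpace ℂ A) :
    IsState ((χ : WeakDual ℂ A) : A →ₗ[ℂ] ℂ) :=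
  ⟨map_one χ, fun a => by
    change 0 ≤ χ (star a * a)
    rw [map_mul, map_star]
    exact star_mul_self_nonneg (χ a)⟩

theorem IsIsocone.characterSpace_ext {I : Set A} (hI : IsIsocone I) {χ₁ χ₂ : characterSpace ℂ A}
    (h : ∀ a ∈ I, χ₁ a = χ₂ a) : χ₁ = χ₂ :=
  CharacterSpace.ext fun a => LinearMap.congr_fun
    (hI.2.2.2.2.2 _ _ (isState_characterSpace χ₁) (isState_characterSpace χ₂) h) a

theorem IsSelfAdjoint.ofReal_re_characterSpace_apply {a : A} (ha : IsSelfAdjoint a)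
    (χ : characterSpace ℂ A) : ((χ a).re : ℂ) = χ a :=
  Complex.conj_eq_iff_re.1 (ha.map χ).star_eq

theorem IsSelfAdjoint.characterSpace_apply_le_iff {a : A} (ha : IsSelfAdjoint a)
    {χ₁ χ₂ : characterSpace ℂ A} : χ₁ a ≤ χ₂ a ↔ (χ₁ a).re ≤ (χ₂ a).re := by
  rw [← ha.ofReal_re_characterSpace_apply χ₁, ← ha.ofReal_re_characterSpace_apply χ₂,
    Complex.real_le_real, Complex.ofReal_re, Complex.ofReal_re]

theorem IsSelfAdjoint.characterSpace_apply_cfc {a : A} (ha : IsSelfAdjoint a) (φ : C(ℝ, ℝ))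
    (χ : characterSpace ℂ A) : χ (cfc φ a) = φ (χ a).re := by
  rw [StarAlgHomClass.map_cfc χ φ a φ.continuous.continuousOn (map_continuous χ) ha (ha.map χ),
    ← ha.ofReal_re_characterSpace_apply χ]
  exact cfc_algebraMap (A := ℂ) _ φ

end CStarAlgebra

section CommCStarAlgebra

variable {A : Type*} [CommCStarAlgebra A]

theorem eq_of_forall_characterSpace_apply_eq {a b : A}
    (h : ∀ χ : characterSpace ℂ A, χ a = χ b) : a = b :=
  (gelfandTransform_isometry A).injective (ContinuousMap.ext h)

noncomputable def realGelfand (a : A) : C(characterSpace ℂ A, ℝ) :=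
  ⟨fun χ => (χ a).re, Complex.continuous_re.comp (map_continuous (gelfandTransform ℂ A a))⟩

@[simp]
theorem realGelfand_apply (a : A) (χ : characterSpace ℂ A) : realGelfand a χ = (χ a).re := rfl

noncomputable def gelfandOfReal (g : C(characterSpace ℂ A, ℝ)) : A :=
  (gelfandStarTransform A).symm ((⟨Complex.ofReal, Complex.continuous_ofReal⟩ : C(ℝ, ℂ)).comp g)

@[simp]
theorem characterSpace_apply_gelfandOfReal (g : C(characterSpace ℂ A, ℝ))
    (χ : characterSpace ℂ A) : χ (gelfandOfReal g) = g χ := by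
  change gelfandStarTransform A (gelfandOfReal g) χ = _
  rw [gelfandOfReal, StarAlgEquiv.apply_symm_apply]
  rfl

theorem continuous_gelfandOfReal : Continuous (gelfandOfReal (A := A)) :=
  (StarAlgEquiv.isometry (gelfandStarTransform A).symm).continuous.comp
    (continuous_postcomp _)

theorem isSelfAdjoint_gelfandOfReal (g : C(characterSpace ℂ A, ℝ)) :
    IsSelfAdjoint (gelfandOfReal g) :=
  eq_of_forall_characterSpace_apply_eq fun χ => by
    rw [map_star, characterSpace_apply_gelfandOfReal, Complex.star_def, Complex.conj_ofReal]

theorem gelfandOfReal_add (f g : C(characterSpace ℂ A, ℝ)) :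
    gelfandOfReal (f + g) = gelfandOfReal f + gelfandOfReal g :=
  eq_of_forall_characterSpace_apply_eq fun χ => by simp

theorem gelfandOfReal_comp (φ : C(ℝ, ℝ)) (g : C(characterSpace ℂ A, ℝ)) :
    gelfandOfReal (φ.comp g) = cfc φ (gelfandOfReal g) :=
  eq_of_forall_characterSpace_apply_eq fun χ => by
    simp [(isSelfAdjoint_gelfandOfReal g).characterSpace_apply_cfc]

theorem IsSelfAdjoint.gelfandOfReal_realGelfand {a : A} (ha : IsSelfAdjoint a) :
    gelfandOfReal (realGelfand a) = a :=
  eq_of_forall_characterSpace_apply_eq fun χ => by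
    rw [characterSpace_apply_gelfandOfReal, realGelfand_apply, ha.ofReal_re_characterSpace_apply]

namespace IsIsocone

variable {I : Set A}

theorem gelfandOfReal_realGelfand_mem (hI : IsIsocone I) {a : A} (ha : a ∈ I) :
    gelfandOfReal (realGelfand a) ∈ I := by
  rwa [(hI.2.1 a ha).gelfandOfReal_realGelfand]

theorem isMonotoneCalculusClosed (hI : IsIsocone I) :
    IsMonotoneCalculusClosed {g : C(characterSpace ℂ A, ℝ) | gelfandOfReal g ∈ I} where
  add_mem f hf g hg := by
    rw [Set.mem_ofPred_eq, gelfandOfReal_add]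
    exact hI.2.2.2.1 _ hf _ hg
  comp_mem f hf φ hφ := by
    rw [Set.mem_ofPred_eq, gelfandOfReal_comp]
    exact hI.2.2.1 _ hf φ φ.continuous hφ
  isClosed := hI.2.2.2.2.1.preimage continuous_gelfandOfReal

theorem mem_of_isotone (hI : IsIsocone I) {a : A} (ha : IsSelfAdjoint a)
    (hiso : ∀ χ₁ χ₂ : characterSpace ℂ A, (∀ b ∈ I, χ₁ b ≤ χ₂ b) → χ₁ a ≤ χ₂ a) : a ∈ I := by
  rw [← ha.gelfandOfReal_realGelfand]
  obtain ⟨a₀, ha₀⟩ := hI.1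
  refine hI.isMonotoneCalculusClosed.mem_of_forall_lt ⟨_, hI.gelfandOfReal_realGelfand_mem ha₀⟩
    fun χ₁ χ₂ hlt => ?_
  by_contra! h
  have : χ₂ a ≤ χ₁ a := hiso χ₂ χ₁ fun b hb =>
    (hI.2.1 b hb).characterSpace_apply_le_iff.2 (h _ (hI.gelfandOfReal_realGelfand_mem hb))
  exact hlt.not_ge (ha.characterSpace_apply_le_iff.1 this)

end IsIsocone

end CommCStarAlgebra

/-- Gelfand duality for commutative I*-algebras.  For an isocone `I` of a
commutative unital C*-algebra `A`, the relation `χ₁ ⪯ χ₂ ↔ ∀ a ∈ I, χ₁ a ≤ χ₂ a` on the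
character space is a partial order making it a toposet, and `I` is exactly the set of
self-adjoint elements whose Gelfand transform is isotone. -/
theorem commutative_isocone_duality {A : Type*} [CommCStarAlgebra A]
    (I : Set A) (hI : IsIsocone I)
    (r : WeakDual.characterSpace ℂ A → WeakDual.characterSpace ℂ A → Prop)
    (hr : ∀ χ₁ χ₂, r χ₁ χ₂ ↔ ∀ a ∈ I, χ₁ a ≤ χ₂ a) :
    -- (a) `r` is a partial order …
    (∀ χ, r χ χ) ∧
    (∀ χ₁ χ₂ χ₃, r χ₁ χ₂ → r χ₂ χ₃ → r χ₁ χ₃) ∧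
    (∀ χ₁ χ₂, r χ₁ χ₂ → r χ₂ χ₁ → χ₁ = χ₂) ∧
    -- … making the character space a toposet:
    (∀ χ₁ χ₂, r χ₁ χ₂ ↔
      ∀ f : WeakDual.characterSpace ℂ A → ℝ, Continuous f →
        (∀ φ ψ, r φ ψ → f φ ≤ f ψ) → f χ₁ ≤ f χ₂) ∧
    -- (b) `I` consists exactly of the self-adjoint elements with isotone Gelfand transform:
    (∀ a : A, a ∈ I ↔ (IsSelfAdjoint a ∧ ∀ χ₁ χ₂, r χ₁ χ₂ → χ₁ a ≤ χ₂ a)) := by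
  have hr' : ∀ χ₁ χ₂, r χ₁ χ₂ ↔ ∀ a ∈ I, realGelfand a χ₁ ≤ realGelfand a χ₂ := fun χ₁ χ₂ =>
    (hr χ₁ χ₂).trans <| forall₂_congr fun a ha => (hI.2.1 a ha).characterSpace_apply_le_iff
  refine ⟨fun χ => (hr χ χ).2 fun _ _ => le_rfl,
    fun χ₁ χ₂ χ₃ h₁₂ h₂₃ => (hr χ₁ χ₃).2 fun a ha =>
      ((hr χ₁ χ₂).1 h₁₂ a ha).trans ((hr χ₂ χ₃).1 h₂₃ a ha),
    fun χ₁ χ₂ h₁₂ h₂₁ => hI.characterSpace_ext fun a ha =>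
      le_antisymm ((hr χ₁ χ₂).1 h₁₂ a ha) ((hr χ₂ χ₁).1 h₂₁ a ha),
    fun χ₁ χ₂ => ⟨fun h _ _ hf => hf χ₁ χ₂ h, fun h => (hr' χ₁ χ₂).2 fun a ha =>
      h _ (realGelfand a).continuous fun φ ψ hφψ => (hr' φ ψ).1 hφψ a ha⟩,
    fun a => ⟨fun ha => ⟨hI.2.1 a ha, fun χ₁ χ₂ h => (hr χ₁ χ₂).1 h a ha⟩,
      fun ⟨ha, hiso⟩ => hI.mem_of_isotone ha fun χ₁ χ₂ h => hiso χ₁ χ₂ ((hr χ₁ χ₂).2 h)⟩⟩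
end

section
/- Let I be a subset of the hermitian 2×2 complex matrices Re(M₂(ℂ)) which is a norm-closed convex cone, contains all real multiples of the identity matrix, and has nonempty interior in Re(M₂(ℂ)). Then I is an isocone of M₂(ℂ): it is nonempty, stable under composition with continuous non-decreasing functions via continuous functional calculus, stable under sums, norm-closed, and separates the states of M₂(ℂ). -/
open scoped ComplexOrder Matrix.Norms.L2Operator

noncomputable instance : CStarAlgebra (Matrix (Fin 2) (Fin 2) ℂ) where

/-!
A hermitian 2×2 matrix has at most two eigenvalues, so on its spectrum a monotone `f` agrees with
an affine function of nonnegative slope; hence `cfc f a = t • a + c • 1` with `t ≥ 0`, which lies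
in the cone. A linear functional is determined by its values on hermitian elements, and two
functionals agreeing on a relatively open set of hermitian elements agree on all of them.
-/

open Complex ComplexStarModule Topology

section Affine

variable {A : Type*} [Ring A] [StarRing A] [Algebra ℝ A] [TopologicalSpace A]
  [ContinuousFunctionalCalculus ℝ A IsSelfAdjoint]

lemma cfc_eq_slope_smul_add_algebraMap {a : A} (ha : IsSelfAdjoint a) {p q : ℝ}
    (hspec : spectrum ℝ a ⊆ {p, q}) (f : ℝ → ℝ) :
    cfc f a = slope f p q • a + algebraMap ℝ A (f p - slope f p q * p) := by
  have hf : Set.EqOn f (fun x => slope f p q * x + (f p - slope f p q * p)) (spectrum ℝ a) := by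
    intro x hx
    rcases hspec hx with rfl | rfl
    · ring
    · have := sub_smul_slope f p x
      simp only [smul_eq_mul, vsub_eq_sub] at this
      linarith
  rw [cfc_congr hf, cfc_add_const _ _ a, cfc_const_mul_id _ a]

lemma exists_cfc_eq_smul_add_algebraMap_of_monotone {a : A} (ha : IsSelfAdjoint a) {p q : ℝ}
    (hspec : spectrum ℝ a ⊆ {p, q}) {f : ℝ → ℝ} (hf : Monotone f) :
    ∃ t : ℝ, 0 ≤ t ∧ ∃ c : ℝ, cfc f a = t • a + algebraMap ℝ A c :=
  ⟨_, (hf.monotoneOn Set.univ).slope_nonneg trivial trivial, _,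
    cfc_eq_slope_smul_add_algebraMap ha hspec f⟩

end Affine

lemma Matrix.IsHermitian.spectrum_real_subset_pair {a : Matrix (Fin 2) (Fin 2) ℂ}
    (ha : a.IsHermitian) : spectrum ℝ a ⊆ {ha.eigenvalues 0, ha.eigenvalues 1} := by
  rw [ha.spectrum_real_eq_range_eigenvalues, Set.range_subset_iff]
  simp [Fin.forall_fin_two]

section Separation

variable {M : Type*} [AddCommGroup M] [Module ℂ M]

lemma LinearMap.ext_of_isSelfAdjoint {A : Type*} [AddCommGroup A] [Module ℂ A] [StarAddMonoid A]
    [StarModule ℂ A] {φ ψ : A →ₗ[ℂ] M}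
    (h : ∀ x, IsSelfAdjoint x → φ x = ψ x) : φ = ψ := by
  ext x
  rw [← realPart_add_I_smul_imaginaryPart x, map_add, map_add, map_smul, map_smul,
    h _ (ℜ x).2, h _ (ℑ x).2]

lemma LinearMap.eq_of_isSelfAdjoint_of_eqOn_nhds {A : Type*} [NormedAddCommGroup A]
    [NormedSpace ℂ A] [StarAddMonoid A] [StarModule ℂ A] {φ ψ : A →ₗ[ℂ] M} {a : A}
    (ha : IsSelfAdjoint a) {ε : ℝ} (hε : 0 < ε)
    (h : ∀ b, IsSelfAdjoint b → ‖b - a‖ < ε → φ b = ψ b) {x : A} (hx : IsSelfAdjoint x) :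
    φ x = ψ x := by
  have hsmall : ∀ᶠ δ : ℝ in 𝓝[≠] 0, ‖δ • x‖ < ε := by
    refine nhdsWithin_le_nhds ((continuous_id.smul continuous_const).norm.tendsto' 0 0 ?_
      |>.eventually (gt_mem_nhds hε))
    simp
  obtain ⟨δ, hδ, hδ0⟩ := (hsmall.and self_mem_nhdsWithin).exists
  have hmem := h (a + δ • x) (ha.add ((IsSelfAdjoint.all δ).smul hx))
    (by rwa [add_sub_cancel_left])
  rw [map_add, map_add, h a ha (by simpa using hε), map_smul_of_tower, map_smul_of_tower] at hmem
  exact smul_right_injective M hδ0 (add_left_cancel hmem)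

end Separation

/-- a norm-closed convex cone of hermitian 2×2 matrices which contains the real
multiples of the identity and has nonempty interior in the hermitian part is an isocone of
`M₂(ℂ)`. -/
theorem isocone_of_cone_in_M2 (I : Set (Matrix (Fin 2) (Fin 2) ℂ))
    (hsa : ∀ a ∈ I, IsSelfAdjoint a)
    (hclosed : IsClosed I)
    (hadd : ∀ a ∈ I, ∀ b ∈ I, a + b ∈ I)
    (hsmul : ∀ t : ℝ, 0 ≤ t → ∀ a ∈ I, (t : ℂ) • a ∈ I)
    (hunit : ∀ r : ℝ, (r : ℂ) • (1 : Matrix (Fin 2) (Fin 2) ℂ) ∈ I)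
    (hint : ∃ a ∈ I, ∃ ε : ℝ, 0 < ε ∧
      ∀ b : Matrix (Fin 2) (Fin 2) ℂ, IsSelfAdjoint b → ‖b - a‖ < ε → b ∈ I) :
    IsIsocone I := by
  refine ⟨⟨_, hunit 0⟩, hsa, ?_, hadd, hclosed, ?_⟩
  · intro a haI f _ hf
    have ha : IsSelfAdjoint a := hsa a haI
    obtain ⟨t, ht, c, hcfc⟩ := exists_cfc_eq_smul_add_algebraMap_of_monotone ha
      (Matrix.IsHermitian.spectrum_real_subset_pair ha) hf
    rw [hcfc, Algebra.algebraMap_eq_smul_one, ← coe_smul, ← coe_smul]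
    exact hadd _ (hsmul t ht a haI) _ (hunit c)
  · intro φ ψ _ _ hagree
    obtain ⟨a, haI, ε, hε, hball⟩ := hint
    exact LinearMap.ext_of_isSelfAdjoint fun x hx =>
      LinearMap.eq_of_isSelfAdjoint_of_eqOn_nhds (hsa a haI) hε
        (fun b hb hba => hagree b (hball b hb hba)) hx
end

section
/- Let A and B be unital C*-algebras, π : A → B a surjective unital *-homomorphism, and I an isocone of A. Then the norm closure of π(I) is an isocone of B. -/
open scoped ComplexOrder

lemma aux_spectrum_subset {B : Type*} [CStarAlgebra B] {x : B} {M : ℝ} (hxM : ‖x‖ ≤ M) :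
    spectrum ℝ x ⊆ Set.Icc (-M) M := by
  intro t ht
  rcases subsingleton_or_nontrivial B with hs | hs
  · rw [spectrum.mem_iff] at ht
    exact absurd (isUnit_of_subsingleton _) ht
  · have h := spectrum.norm_le_norm_of_mem ht
    rw [Real.norm_eq_abs] at h
    exact abs_le.mp (h.trans hxM)

lemma aux_norm_cfc_sub_aeval_le {B : Type*} [CStarAlgebra B] {f : ℝ → ℝ} (hf : Continuous f)
    {p : Polynomial ℝ} {M ε : ℝ} (hε : 0 ≤ ε)
    (hp : ∀ t ∈ Set.Icc (-M) M, |Polynomial.eval t p - f t| ≤ ε)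
    {x : B} (hx : IsSelfAdjoint x) (hxM : ‖x‖ ≤ M) :
    ‖cfc f x - Polynomial.aeval x p‖ ≤ ε := by
  have hspec : spectrum ℝ x ⊆ Set.Icc (-M) M := aux_spectrum_subset hxM
  rw [← cfc_polynomial p x, ← cfc_sub f p.eval x hf.continuousOn
    (Polynomial.continuous p).continuousOn]
  refine norm_cfc_le hε fun t ht => ?_
  simpa [Real.norm_eq_abs, abs_sub_comm] using hp t (hspec ht)

lemma aux_tendsto_cfc {B : Type*} [CStarAlgebra B] {f : ℝ → ℝ} (hf : Continuous f)
    {s : ℕ → B} {b : B} (hs : ∀ n, IsSelfAdjoint (s n)) (hb : IsSelfAdjoint b)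
    (h : Filter.Tendsto s Filter.atTop (nhds b)) :
    Filter.Tendsto (fun n => cfc f (s n)) Filter.atTop (nhds (cfc f b)) := by
  rw [Metric.tendsto_atTop]
  intro ε hε
  set M : ℝ := ‖b‖ + 1 with hM
  obtain ⟨p, hp⟩ := exists_polynomial_near_of_continuousOn (-M) M f hf.continuousOn (ε/4)
    (by positivity)
  have hp' : ∀ t ∈ Set.Icc (-M) M, |Polynomial.eval t p - f t| ≤ ε/4 := fun t ht => (hp t ht).le
  obtain ⟨N1, hN1⟩ := Metric.tendsto_atTop.mp h 1 one_pos
  have h2 : Filter.Tendsto (fun n => Polynomial.aeval (s n) p) Filter.atTop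
      (nhds (Polynomial.aeval b p)) := (p.continuous_aeval.tendsto _).comp h
  obtain ⟨N2, hN2⟩ := Metric.tendsto_atTop.mp h2 (ε/4) (by positivity)
  refine ⟨max N1 N2, fun n hn => ?_⟩
  have hd1 := hN1 n (le_trans (le_max_left _ _) hn)
  have hd2 := hN2 n (le_trans (le_max_right _ _) hn)
  have hsM : ‖s n‖ ≤ M := by
    rw [dist_eq_norm] at hd1
    have := norm_sub_norm_le (s n) b
    rw [hM]; linarith
  have hbM : ‖b‖ ≤ M := by rw [hM]; linarith
  have e1 : dist (cfc f (s n)) (Polynomial.aeval (s n) p) ≤ ε/4 := by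
    rw [dist_eq_norm]
    exact aux_norm_cfc_sub_aeval_le hf (by positivity) hp' (hs n) hsM
  have e3 : dist (Polynomial.aeval b p) (cfc f b) ≤ ε/4 := by
    rw [dist_comm, dist_eq_norm]
    exact aux_norm_cfc_sub_aeval_le hf (by positivity) hp' hb hbM
  calc dist (cfc f (s n)) (cfc f b)
      ≤ dist (cfc f (s n)) (Polynomial.aeval (s n) p)
        + dist (Polynomial.aeval (s n) p) (Polynomial.aeval b p)
        + dist (Polynomial.aeval b p) (cfc f b) := dist_triangle4 _ _ _ _
    _ < ε := by linarith

/-- the closure of the image of an isocone under a surjective unital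
*-homomorphism is an isocone of the codomain. -/
theorem closure_image_isocone_of_surjective {A B : Type*} [CStarAlgebra A] [CStarAlgebra B]
    (π : A →⋆ₐ[ℂ] B) (hπ : Function.Surjective π)
    (I : Set A) (hI : IsIsocone I) :
    IsIsocone (closure (π '' I)) := by
  obtain ⟨hne, hsa, hcfc, hadd, hcl, hsep⟩ := hI
  have hπcont : Continuous π :=
    AddMonoidHomClass.continuous_of_bound π 1
      (by simpa using fun a => NonUnitalStarAlgHom.norm_apply_le π a)
  have himgSA : ∀ b ∈ π '' I, IsSelfAdjoint b := by
    rintro _ ⟨a, haI, rfl⟩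
    exact (hsa a haI).map π
  have hclosSA : ∀ b ∈ closure (π '' I), IsSelfAdjoint b := by
    intro b hb
    have : closure (π '' I) ⊆ {x : B | star x = x} :=
      closure_minimal (fun x hx => (himgSA x hx).star_eq)
        (isClosed_eq continuous_star continuous_id)
    exact this hb
  refine ⟨?_, hclosSA, ?_, ?_, isClosed_closure, ?_⟩
  · obtain ⟨a, ha⟩ := hne
    exact ⟨π a, subset_closure ⟨a, ha, rfl⟩⟩
  · -- cfc stability
    intro b hb f hfc hfm
    obtain ⟨u, hu, hub⟩ := mem_closure_iff_seq_limit.mp hb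
    choose y hyI hyu using hu
    have husa : ∀ n, IsSelfAdjoint (u n) := fun n => himgSA _ (⟨y n, hyI n, hyu n⟩)
    have hmem : ∀ n, cfc f (u n) ∈ π '' I := by
      intro n
      have hy : IsSelfAdjoint (y n) := hsa _ (hyI n)
      have : π (cfc f (y n)) = cfc f (π (y n)) :=
        StarAlgHom.map_cfc π f (y n) hfc.continuousOn hπcont hy (hy.map π)
      rw [← hyu n, ← this]
      exact ⟨cfc f (y n), hcfc _ (hyI n) f hfc hfm, rfl⟩
    exact mem_closure_of_tendsto (aux_tendsto_cfc hfc husa (hclosSA b hb) hub)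
      (Filter.Eventually.of_forall hmem)
  · -- addition
    intro a ha b hb
    obtain ⟨u, hu, hua⟩ := mem_closure_iff_seq_limit.mp ha
    obtain ⟨v, hv, hvb⟩ := mem_closure_iff_seq_limit.mp hb
    have hmem : ∀ n, u n + v n ∈ π '' I := by
      intro n
      obtain ⟨x, hxI, hx⟩ := hu n
      obtain ⟨y, hyI, hy⟩ := hv n
      exact ⟨x + y, hadd x hxI y hyI, by rw [map_add, hx, hy]⟩
    exact mem_closure_of_tendsto (hua.add hvb) (Filter.Eventually.of_forall hmem)
  · -- states
    intro φ ψ hφ hψ hagree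
    set φ' : A →ₗ[ℂ] ℂ := φ.comp π.toAlgHom.toLinearMap with hφ'
    set ψ' : A →ₗ[ℂ] ℂ := ψ.comp π.toAlgHom.toLinearMap with hψ'
    have hstate : ∀ (χ : B →ₗ[ℂ] ℂ), IsState χ → IsState (χ.comp π.toAlgHom.toLinearMap) := by
      intro χ ⟨h1, h2⟩
      refine ⟨by simpa using h1, fun a => ?_⟩
      have : π (star a * a) = star (π a) * π a := by rw [map_mul, map_star]
      simpa [this] using h2 (π a)
    have hag : ∀ a ∈ I, φ' a = ψ' a := by
      intro a haI
      exact hagree (π a) (subset_closure ⟨a, haI, rfl⟩)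
    have := hsep φ' ψ' (hstate φ hφ) (hstate ψ hψ) hag
    ext b
    obtain ⟨a, rfl⟩ := hπ b
    exact DFunLike.congr_fun this a
end

section
/- Let A be a unital C*-algebra and let C ⊆ Re(A) be a nonempty subset stable under sums and under continuous non-decreasing functional calculus (so C contains all real multiples of the unit). Let C⁺ denote the set of positive elements of C. Then: (a) C − C = C⁺ − C⁺, i.e. every difference of two elements of C is a difference of two positive elements of C; and (b) the norm closure B of C − C is a real linear subspace of Re(A) which is closed under the Jordan product a ∘ b = ½(ab + ba). -/
open scoped ComplexOrder

/-- for a nonempty subset `C` of self-adjoint elements stable under sums and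
under continuous non-decreasing functional calculus: (a) `C − C = C⁺ − C⁺`, and (b) the norm
closure `B` of `C − C` is a real linear subspace of the self-adjoint part which is closed
under the Jordan product. -/
theorem differences_of_cone_jordan {A : Type*} [CStarAlgebra A]
    (C : Set A)
    (hne : C.Nonempty)
    (hsa : ∀ a ∈ C, IsSelfAdjoint a)
    (hadd : ∀ a ∈ C, ∀ b ∈ C, a + b ∈ C)
    (hcfc : ∀ a ∈ C, ∀ f : ℝ → ℝ, Continuous f → Monotone f → cfc f a ∈ C) :
    -- (a) every difference of elements of `C` is a difference of positive elements of `C`: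
    ({c : A | ∃ a ∈ C, ∃ b ∈ C, c = a - b} =
      {c : A | ∃ a ∈ C, ∃ b ∈ C,
        spectrum ℝ a ⊆ Set.Ici (0 : ℝ) ∧ spectrum ℝ b ⊆ Set.Ici (0 : ℝ) ∧ c = a - b}) ∧
    -- (b) the closure `B` of `C − C` is a real linear subspace of `Re(A)`, stable under the
    -- Jordan product:
    (∀ B : Set A, B = closure {c : A | ∃ a ∈ C, ∃ b ∈ C, c = a - b} →
      (∀ a ∈ B, IsSelfAdjoint a) ∧
      (0 : A) ∈ B ∧
      (∀ a ∈ B, ∀ b ∈ B, a + b ∈ B) ∧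
      (∀ r : ℝ, ∀ a ∈ B, (r : ℂ) • a ∈ B) ∧
      (∀ a ∈ B, ∀ b ∈ B, (2 : ℂ)⁻¹ • (a * b + b * a) ∈ B)) := by
  set S : Set A := {c : A | ∃ a ∈ C, ∃ b ∈ C, c = a - b} with hSdef
  -- shifting an element of C by a large constant gives a positive element of C
  have hshift : ∀ a ∈ C, ∀ t : ℝ, 0 ≤ t →
      cfc (fun x : ℝ => x + (‖a‖ * ‖(1 : A)‖ + t)) a ∈ C ∧
      spectrum ℝ (cfc (fun x : ℝ => x + (‖a‖ * ‖(1 : A)‖ + t)) a) ⊆ Set.Ici (0 : ℝ) ∧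
      cfc (fun x : ℝ => x + (‖a‖ * ‖(1 : A)‖ + t)) a
        = a + algebraMap ℝ A (‖a‖ * ‖(1 : A)‖ + t) := by
    intro a ha t ht
    set s : ℝ := ‖a‖ * ‖(1 : A)‖ + t with hs
    have hcont : Continuous (fun x : ℝ => x + s) := by continuity
    have hmono : Monotone (fun x : ℝ => x + s) := fun x y hxy => by simpa using hxy
    refine ⟨hcfc a ha _ hcont hmono, ?_, ?_⟩
    · rw [cfc_map_spectrum (fun x : ℝ => x + s) a (hsa a ha) hcont.continuousOn]
      rintro - ⟨k, hk, rfl⟩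
      have h1 : ‖k‖ ≤ ‖a‖ * ‖(1 : A)‖ := spectrum.norm_le_norm_mul_of_mem hk
      have h2 : -(‖a‖ * ‖(1 : A)‖) ≤ k := by
        have := abs_le.mp (by simpa [Real.norm_eq_abs] using h1)
        linarith [this.1]
      simp only [Set.mem_Ici]
      linarith
    · have h1 : (fun x : ℝ => x + s) = fun x => id x + s := rfl
      rw [h1, cfc_add_const s id a continuous_id.continuousOn (hsa a ha),
        cfc_id ℝ a (hsa a ha)]
  -- C is stable under multiplication by nonnegative reals
  have hCsmul : ∀ r : ℝ, 0 ≤ r → ∀ a ∈ C, r • a ∈ C := by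
    intro r hr a ha
    have := hcfc a ha (fun x => r * x) (by continuity)
      (fun x y hxy => mul_le_mul_of_nonneg_left hxy hr)
    rwa [show (fun x : ℝ => r * x) = (r * ·) from rfl, cfc_const_mul_id r a (hsa a ha)] at this
  -- S is closed under addition, negation, real scalar multiplication
  have hSadd : ∀ x ∈ S, ∀ y ∈ S, x + y ∈ S := by
    rintro - ⟨a, ha, b, hb, rfl⟩ - ⟨c, hc, d, hd, rfl⟩
    exact ⟨a + c, hadd a ha c hc, b + d, hadd b hb d hd, by abel⟩
  have hSneg : ∀ x ∈ S, -x ∈ S := by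
    rintro - ⟨a, ha, b, hb, rfl⟩
    exact ⟨b, hb, a, ha, by abel⟩
  have hSsmul : ∀ r : ℝ, ∀ x ∈ S, r • x ∈ S := by
    rintro r - ⟨a, ha, b, hb, rfl⟩
    rcases le_total 0 r with hr | hr
    · exact ⟨r • a, hCsmul r hr a ha, r • b, hCsmul r hr b hb, by rw [smul_sub]⟩
    · refine ⟨(-r) • b, hCsmul (-r) (by linarith) b hb,
        (-r) • a, hCsmul (-r) (by linarith) a ha, ?_⟩
      rw [smul_sub]
      module
  -- squares of elements of C lie in S
  have hSsq : ∀ a ∈ C, a * a ∈ S := by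
    intro a ha
    set φ : ℝ → ℝ := fun t => (max t 0) ^ 2 with hφ
    set ψ : ℝ → ℝ := fun t => -(min t 0) ^ 2 with hψ
    have hφc : Continuous φ := by fun_prop
    have hψc : Continuous ψ := by fun_prop
    have hφm : Monotone φ := by
      intro x y hxy
      have h1 : max x 0 ≤ max y 0 := max_le_max hxy le_rfl
      have h2 : (0:ℝ) ≤ max x 0 := le_max_right x 0
      simp only [hφ]
      nlinarith
    have hψm : Monotone ψ := by
      intro x y hxy
      have h1 : min x 0 ≤ min y 0 := min_le_min hxy le_rfl
      have h2 : min y 0 ≤ (0:ℝ) := min_le_right y 0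
      simp only [hψ]
      nlinarith
    have key : a * a = cfc φ a - cfc ψ a := by
      rw [← cfc_sub φ ψ a hφc.continuousOn hψc.continuousOn]
      have h1 : (fun x : ℝ => φ x - ψ x) = fun x => x * x := by
        funext t
        simp only [hφ, hψ]
        rcases le_total t 0 with h | h
        · rw [max_eq_right h, min_eq_left h]; ring
        · rw [max_eq_left h, min_eq_right h]; ring
      rw [h1, cfc_mul (fun x : ℝ => x) (fun x : ℝ => x) a continuous_id.continuousOn
        continuous_id.continuousOn, cfc_id' ℝ a (hsa a ha)]
    exact key ▸ ⟨cfc φ a, hcfc a ha φ hφc hφm, cfc ψ a, hcfc a ha ψ hψc hψm, rfl⟩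
  -- the Jordan product of two elements of C lies in S
  have hjC : ∀ u ∈ C, ∀ v ∈ C, (2 : ℂ)⁻¹ • (u * v + v * u) ∈ S := by
    intro u hu v hv
    have hz : u * v + v * u = (u + v) * (u + v) - u * u - v * v := by noncomm_ring
    have hmem : (u + v) * (u + v) - u * u - v * v ∈ S := by
      simp only [sub_eq_add_neg]
      refine hSadd _ (hSadd _ (hSsq _ (hadd u hu v hv)) _ (hSneg _ (hSsq u hu))) _
        (hSneg _ (hSsq v hv))
    have h2 : (2 : ℂ)⁻¹ • ((u + v) * (u + v) - u * u - v * v)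
        = ((2:ℝ)⁻¹ : ℝ) • ((u + v) * (u + v) - u * u - v * v) := by
      rw [← Complex.coe_smul]
      norm_num
    rw [hz, h2]
    exact hSsmul _ _ hmem
  -- the Jordan product of two elements of S lies in S
  have hjS : ∀ x ∈ S, ∀ y ∈ S, (2 : ℂ)⁻¹ • (x * y + y * x) ∈ S := by
    rintro - ⟨a, ha, b, hb, rfl⟩ - ⟨c, hc, d, hd, rfl⟩
    have hexp : (2 : ℂ)⁻¹ • ((a - b) * (c - d) + (c - d) * (a - b))
        = (2 : ℂ)⁻¹ • (a * c + c * a) + (-((2 : ℂ)⁻¹ • (a * d + d * a)))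
          + (-((2 : ℂ)⁻¹ • (b * c + c * b))) + (2 : ℂ)⁻¹ • (b * d + d * b) := by
      rw [← smul_neg, ← smul_neg, ← smul_add, ← smul_add, ← smul_add]
      congr 1
      noncomm_ring
    rw [hexp]
    exact hSadd _ (hSadd _ (hSadd _ (hjC a ha c hc) _ (hSneg _ (hjC a ha d hd)))
      _ (hSneg _ (hjC b hb c hc))) _ (hjC b hb d hd)
  constructor
  · apply Set.eq_of_subset_of_subset
    · rintro - ⟨a, ha, b, hb, rfl⟩
      obtain ⟨ha', hap, hae⟩ := hshift a ha (‖b‖ * ‖(1 : A)‖) (by positivity)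
      obtain ⟨hb', hbp, hbe⟩ := hshift b hb (‖a‖ * ‖(1 : A)‖) (by positivity)
      refine ⟨_, ha', _, hb', hap, hbp, ?_⟩
      rw [hae, hbe]
      have : ‖a‖ * ‖(1:A)‖ + ‖b‖ * ‖(1:A)‖ = ‖b‖ * ‖(1:A)‖ + ‖a‖ * ‖(1:A)‖ := by ring
      rw [this]
      abel
    · rintro - ⟨a, ha, b, hb, -, -, rfl⟩
      exact ⟨a, ha, b, hb, rfl⟩
  · rintro B rfl
    refine ⟨?_, ?_, ?_, ?_, ?_⟩
    · intro a ha
      have hcl : IsClosed {x : A | IsSelfAdjoint x} := by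
        have : {x : A | IsSelfAdjoint x} = {x : A | star x = x} := rfl
        rw [this]
        exact isClosed_eq continuous_star continuous_id
      have hsub : S ⊆ {x : A | IsSelfAdjoint x} := by
        rintro - ⟨a, ha, b, hb, rfl⟩
        exact (hsa a ha).sub (hsa b hb)
      exact closure_minimal hsub hcl ha
    · obtain ⟨a, ha⟩ := hne
      exact subset_closure ⟨a, ha, a, ha, by abel⟩
    · intro x hx y hy
      exact map_mem_closure₂ continuous_add hx hy hSadd
    · intro r x hx
      refine map_mem_closure (continuous_const_smul ((r : ℂ))) hx ?_
      intro y hy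
      rw [Complex.coe_smul]
      exact hSsmul r y hy
    · intro x hx y hy
      have hc : Continuous
          (Function.uncurry fun x y : A => (2 : ℂ)⁻¹ • (x * y + y * x)) := by
        fun_prop
      exact map_mem_closure₂ (f := fun x y : A => (2 : ℂ)⁻¹ • (x * y + y * x))
        hc hx hy hjS
end

section
/- Let A be a unital C*-algebra satisfying the strong Stone–Weierstrass property: every norm-closed real-linear subspace B of Re(A) that contains the unit, is closed under the Jordan product a ∘ b = ½(ab + ba), and separates P(A) ∪ {0} (the pure states of A together with the zero functional, i.e. for any two distinct elements of this set there is b ∈ B on which they differ) must equal Re(A). Let C ⊆ Re(A) be nonempty, stable under sums, stable under continuous non-decreasing functional calculus, norm-closed, and separating the pure states of A. Then C separates all states of A. -/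
open scoped ComplexOrder

/-- A pure state is an extreme point of the set of states. -/
def IsPureState {A : Type*} [CStarAlgebra A] (φ : A →ₗ[ℂ] ℂ) : Prop :=
  φ ∈ Set.extremePoints ℝ {ψ : A →ₗ[ℂ] ℂ | IsState ψ}

section Aux

variable {A : Type*} [CStarAlgebra A]

lemma isState_star_apply {φ : A →ₗ[ℂ] ℂ} (hφ : IsState φ) (a : A) :
    φ (star a) = starRingEnd ℂ (φ a) := by
  have him : ∀ x : A, (φ (star x * x)).im = 0 := fun x =>
    ((Complex.nonneg_iff.mp (hφ.2 x)).2).symm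
  have e1 : star (a + 1) * (a + 1) = star a * a + (star a + (a + 1)) := by
    rw [star_add, star_one]; noncomm_ring
  have e2 : star (a + Complex.I • 1) * (a + Complex.I • 1)
      = star a * a + (Complex.I • star a + (-Complex.I) • a + 1) := by
    rw [star_add, star_smul, star_one, Complex.star_def, Complex.conj_I]
    simp only [mul_add, add_mul, smul_mul_assoc, mul_smul_comm, smul_smul, mul_one, one_mul,
      Complex.I_mul_I, neg_smul, neg_neg, one_smul, neg_mul, neg_one_smul]
    match_scalars <;> simp [Complex.I_sq]
  have h1 := him (a + 1)
  have h2 := him (a + Complex.I • 1)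
  rw [e1] at h1; rw [e2] at h2
  simp only [map_add, map_smul, map_one, smul_eq_mul, Complex.add_im, Complex.mul_im,
    Complex.I_re, Complex.I_im, Complex.neg_re, Complex.neg_im, Complex.one_im,
    hφ.1, him a] at h1 h2
  apply Complex.ext
  · simp only [Complex.conj_re]; linarith
  · simp only [Complex.conj_im]; linarith

lemma isState_real {φ : A →ₗ[ℂ] ℂ} (hφ : IsState φ) {a : A} (ha : IsSelfAdjoint a) :
    (φ a).im = 0 := by
  have := isState_star_apply hφ a
  rw [ha.star_eq] at this
  have := congrArg Complex.im this
  simp only [Complex.conj_im] at this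
  linarith

lemma sa_norm_sub_eq_star_mul_self [Nontrivial A] {a : A} (ha : IsSelfAdjoint a) :
    ∃ x : A, star x * x = algebraMap ℝ A ‖a‖ - a := by
  refine ⟨cfc (fun t : ℝ => Real.sqrt (‖a‖ - t)) a, ?_⟩
  have hx : IsSelfAdjoint (cfc (fun t : ℝ => Real.sqrt (‖a‖ - t)) a) := cfc_predicate _ a
  rw [hx.star_eq, ← cfc_mul (fun t : ℝ => Real.sqrt (‖a‖ - t)) _ a (by fun_prop) (by fun_prop)]
  have : cfc (fun t : ℝ => Real.sqrt (‖a‖ - t) * Real.sqrt (‖a‖ - t)) a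
      = cfc (fun t : ℝ => ‖a‖ - t) a := by
    apply cfc_congr
    intro t ht
    have hb : |t| ≤ ‖a‖ := by
      simpa using spectrum.norm_le_norm_of_mem ht
    exact Real.mul_self_sqrt (by cases abs_le.mp hb; linarith)
  rw [this, cfc_sub _ _ a (by fun_prop) (by fun_prop), cfc_const _ a, cfc_id' ℝ a]

lemma isState_norm_sa {φ : A →ₗ[ℂ] ℂ} (hφ : IsState φ) {a : A} (ha : IsSelfAdjoint a) :
    ‖φ a‖ ≤ ‖a‖ := by
  have hone : (1 : A) ≠ 0 := by
    intro h
    have h0 : φ 0 = 0 := map_zero φ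
    rw [← h, hφ.1] at h0
    exact one_ne_zero h0
  haveI : Nontrivial A := nontrivial_of_ne 1 0 hone
  have halg : ∀ r : ℝ, φ (algebraMap ℝ A r) = (r : ℂ) := by
    intro r
    rw [Algebra.algebraMap_eq_smul_one, show (r : ℝ) • (1 : A) = (r : ℂ) • 1 by
      rw [← smul_one_smul ℂ r (1 : A)]; norm_num, map_smul, hφ.1, smul_eq_mul, mul_one]
  obtain ⟨x, hx⟩ := sa_norm_sub_eq_star_mul_self ha
  obtain ⟨y, hy⟩ := sa_norm_sub_eq_star_mul_self ha.neg
  have h1 : 0 ≤ φ (algebraMap ℝ A ‖a‖ - a) := hx ▸ hφ.2 x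
  have h2 : 0 ≤ φ (algebraMap ℝ A ‖a‖ + a) := by
    have := hφ.2 y
    rw [hy, norm_neg, sub_neg_eq_add] at this
    exact this
  rw [map_sub, halg] at h1
  rw [map_add, halg] at h2
  rw [Complex.nonneg_iff] at h1 h2
  have h1' := h1.1; have h2' := h2.1
  simp only [Complex.sub_re, Complex.add_re, Complex.ofReal_re] at h1' h2'
  have him := isState_real hφ ha
  rw [show φ a = ((φ a).re : ℂ) from Complex.ext rfl (by simp [him]), Complex.norm_real,
    Real.norm_eq_abs, abs_le]
  constructor <;> linarith

lemma exists_sa_decomp (a : A) : ∃ h k : A, IsSelfAdjoint h ∧ IsSelfAdjoint k ∧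
  a = h + Complex.I • k ∧ ‖h‖ ≤ ‖a‖ ∧ ‖k‖ ≤ ‖a‖ := by
  refine ⟨(2 : ℂ)⁻¹ • (a + star a), (2 : ℂ)⁻¹ • (Complex.I • (star a - a)), ?_, ?_, ?_, ?_, ?_⟩
  · rw [IsSelfAdjoint, star_smul, star_add, star_star]
    simp [Complex.star_def, add_comm]
  · rw [IsSelfAdjoint, star_smul, star_smul, star_sub, star_star]
    simp only [Complex.star_def, map_inv₀, Complex.conj_ofNat, Complex.conj_I]
    module
  · match_scalars
    · linear_combination ((1 : ℂ)/2) * Complex.I_sq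
    · linear_combination (-(1 : ℂ)/2) * Complex.I_sq
  · calc ‖(2:ℂ)⁻¹ • (a + star a)‖ = 2⁻¹ * ‖a + star a‖ := by rw [norm_smul]; norm_num
      _ ≤ 2⁻¹ * (‖a‖ + ‖star a‖) := by gcongr; exact norm_add_le _ _
      _ = ‖a‖ := by rw [norm_star]; ring
  · calc ‖(2:ℂ)⁻¹ • Complex.I • (star a - a)‖ = 2⁻¹ * (1 * ‖star a - a‖) := by
          rw [norm_smul, norm_smul, Complex.norm_I]; norm_num
      _ ≤ 2⁻¹ * (1 * (‖star a‖ + ‖a‖)) := by gcongr; exact norm_sub_le _ _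
      _ = ‖a‖ := by rw [norm_star]; ring

lemma isState_continuous {φ : A →ₗ[ℂ] ℂ} (hφ : IsState φ) : Continuous φ := by
  refine AddMonoidHomClass.continuous_of_bound φ 2 fun a => ?_
  obtain ⟨h, k, hsa, ksa, hd, hnh, hnk⟩ := exists_sa_decomp a
  calc ‖φ a‖ = ‖φ h + Complex.I * φ k‖ := by rw [hd, map_add, map_smul, smul_eq_mul]
    _ ≤ ‖φ h‖ + ‖Complex.I * φ k‖ := norm_add_le _ _
    _ = ‖φ h‖ + ‖φ k‖ := by rw [norm_mul, Complex.norm_I, one_mul]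
    _ ≤ ‖a‖ + ‖a‖ := add_le_add (le_trans (isState_norm_sa hφ hsa) hnh)
        (le_trans (isState_norm_sa hφ ksa) hnk)
    _ = 2 * ‖a‖ := by ring

end Aux

/-- in a unital C*-algebra with the strong Stone–Weierstrass property, a
nonempty, sum-stable, non-decreasing-functional-calculus-stable, norm-closed set separating
the pure states separates all states. -/
theorem separates_pure_states_implies_separates_states {A : Type*} [CStarAlgebra A]
    -- the strong Stone–Weierstrass property:
    (hSW : ∀ B : Set A,
      (∀ a ∈ B, IsSelfAdjoint a) →
      (1 : A) ∈ B →
      (∀ a ∈ B, ∀ b ∈ B, a + b ∈ B) →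
      (∀ r : ℝ, ∀ a ∈ B, (r : ℂ) • a ∈ B) →
      (∀ a ∈ B, ∀ b ∈ B, (2 : ℂ)⁻¹ • (a * b + b * a) ∈ B) →
      IsClosed B →
      (∀ φ ψ : A →ₗ[ℂ] ℂ, (IsPureState φ ∨ φ = 0) → (IsPureState ψ ∨ ψ = 0) →
        φ ≠ ψ → ∃ b ∈ B, φ b ≠ ψ b) →
      B = {a : A | IsSelfAdjoint a})
    (C : Set A)
    (hne : C.Nonempty)
    (hsa : ∀ a ∈ C, IsSelfAdjoint a)
    (hadd : ∀ a ∈ C, ∀ b ∈ C, a + b ∈ C)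
    (hcfc : ∀ a ∈ C, ∀ f : ℝ → ℝ, Continuous f → Monotone f → cfc f a ∈ C)
    (hclosed : IsClosed C)
    (hsep : ∀ φ ψ : A →ₗ[ℂ] ℂ, IsPureState φ → IsPureState ψ →
      (∀ a ∈ C, φ a = ψ a) → φ = ψ) :
    ∀ φ ψ : A →ₗ[ℂ] ℂ, IsState φ → IsState ψ → (∀ a ∈ C, φ a = ψ a) → φ = ψ := by
  intro φ ψ hφ hψ hagree
  set S : Set A := insert 1 C with hS
  set V : Submodule ℝ A := Submodule.span ℝ S with hV
  have hCV : C ⊆ (V : Set A) := fun c hc =>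
    Submodule.subset_span (Set.mem_insert_of_mem _ hc)
  have h1V : (1 : A) ∈ V := Submodule.subset_span (Set.mem_insert _ _)
  have hrsmul : ∀ (r : ℝ) (a : A), (r : ℂ) • a = r • a := fun r a => by
    rw [← smul_one_smul ℂ r a, Complex.real_smul, mul_one]
  -- squares of elements of C lie in V
  have hsq : ∀ c ∈ C, c * c ∈ V := by
    intro c hc
    have hcsa := hsa c hc
    have hg : Monotone (fun x : ℝ => (max x 0) ^ 2) := fun x y hxy =>
      pow_le_pow_left₀ (le_max_right x 0) (max_le_max hxy le_rfl) 2
    have hh : Monotone (fun x : ℝ => -(min x 0) ^ 2) := by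
      intro x y hxy
      simp only [neg_le_neg_iff]
      calc (min y 0) ^ 2 = (-min y 0) ^ 2 := by ring
        _ ≤ (-min x 0) ^ 2 := pow_le_pow_left₀ (neg_nonneg.2 (min_le_right y 0))
            (neg_le_neg (min_le_min hxy le_rfl)) 2
        _ = (min x 0) ^ 2 := by ring
    have hgC : cfc (fun x : ℝ => (max x 0) ^ 2) c ∈ C := hcfc c hc _ (by fun_prop) hg
    have hhC : cfc (fun x : ℝ => -(min x 0) ^ 2) c ∈ C := hcfc c hc _ (by fun_prop) hh
    have key : cfc (fun x : ℝ => (max x 0) ^ 2) c - cfc (fun x : ℝ => -(min x 0) ^ 2) c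
        = c * c := by
      rw [← cfc_sub _ _ c (by fun_prop) (by fun_prop)]
      have e : (fun x : ℝ => (max x 0) ^ 2 - -(min x 0) ^ 2) = fun x : ℝ => x * x := by
        funext x
        rcases le_total x 0 with hx | hx
        · rw [max_eq_right hx, min_eq_left hx]; ring
        · rw [max_eq_left hx, min_eq_right hx]; ring
      rw [e, cfc_mul _ _ c (by fun_prop) (by fun_prop), cfc_id' ℝ c]
    rw [← key]
    exact sub_mem (hCV hgC) (hCV hhC)
  -- Jordan products of generators
  have jordan_gen : ∀ c ∈ S, ∀ d ∈ S, c * d + d * c ∈ V := by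
    intro c hc d hd
    rcases hc with rfl | hc
    · have : (1 : A) * d + d * 1 = d + d := by noncomm_ring
      rw [this]
      exact add_mem (Submodule.subset_span hd) (Submodule.subset_span hd)
    rcases hd with rfl | hd
    · have : c * 1 + 1 * c = c + c := by noncomm_ring
      rw [this]
      exact add_mem (hCV hc) (hCV hc)
    · have : c * d + d * c = (c + d) * (c + d) - c * c - d * d := by noncomm_ring
      rw [this]
      exact sub_mem (sub_mem (hsq _ (hadd c hc d hd)) (hsq c hc)) (hsq d hd)
  -- Jordan products on V
  have jordan_V : ∀ a ∈ V, ∀ b ∈ V, a * b + b * a ∈ V := by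
    intro a ha
    induction ha using Submodule.span_induction with
    | mem x hx =>
      intro b hb
      induction hb using Submodule.span_induction with
      | mem y hy => exact jordan_gen x hx y hy
      | zero => simpa using zero_mem V
      | add y z hy hz hy' hz' =>
        have : x * (y + z) + (y + z) * x = (x * y + y * x) + (x * z + z * x) := by noncomm_ring
        rw [this]; exact add_mem hy' hz'
      | smul r y hy hy' =>
        have : x * (r • y) + (r • y) * x = r • (x * y + y * x) := by
          rw [mul_smul_comm, smul_mul_assoc, smul_add]
        rw [this]; exact Submodule.smul_mem V r hy'
    | zero => intro b hb; simpa using zero_mem V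
    | add y z hy hz hy' hz' =>
      intro b hb
      have : (y + z) * b + b * (y + z) = (y * b + b * y) + (z * b + b * z) := by noncomm_ring
      rw [this]; exact add_mem (hy' b hb) (hz' b hb)
    | smul r y hy hy' =>
      intro b hb
      have : (r • y) * b + b * (r • y) = r • (y * b + b * y) := by
        rw [mul_smul_comm, smul_mul_assoc, smul_add]
      rw [this]; exact Submodule.smul_mem V r (hy' b hb)
  set B : Set A := closure (V : Set A) with hB
  -- B is self-adjoint
  have hsaclosed : IsClosed {a : A | IsSelfAdjoint a} := isClosed_eq continuous_star continuous_id
  have hVsa : (V : Set A) ⊆ {a | IsSelfAdjoint a} := by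
    intro a ha
    induction ha using Submodule.span_induction with
    | mem x hx =>
      rcases hx with rfl | hx
      · exact IsSelfAdjoint.one A
      · exact hsa x hx
    | zero => exact IsSelfAdjoint.zero A
    | add y z _ _ hy hz => exact hy.add hz
    | smul r y _ hy => exact IsSelfAdjoint.smul (star_trivial r) hy
  have hBsa : ∀ a ∈ B, IsSelfAdjoint a := fun a ha => closure_minimal hVsa hsaclosed ha
  have h1B : (1 : A) ∈ B := subset_closure h1V
  have haddB : ∀ a ∈ B, ∀ b ∈ B, a + b ∈ B := fun a ha b hb =>
    map_mem_closure₂ continuous_add ha hb fun x hx y hy => add_mem hx hy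
  have hsmulRB : ∀ (r : ℝ), ∀ a ∈ B, r • a ∈ B := fun r a ha =>
    map_mem_closure (continuous_const_smul r) ha fun x hx => Submodule.smul_mem V r hx
  have hsmulB : ∀ (r : ℝ), ∀ a ∈ B, (r : ℂ) • a ∈ B := fun r a ha => by
    rw [hrsmul]; exact hsmulRB r a ha
  have hjordanB : ∀ a ∈ B, ∀ b ∈ B, (2 : ℂ)⁻¹ • (a * b + b * a) ∈ B := by
    intro a ha b hb
    have hmem : a * b + b * a ∈ B :=
      map_mem_closure₂ (f := fun x y : A => x * y + y * x)
        ((continuous_fst.mul continuous_snd).add (continuous_snd.mul continuous_fst)) ha hb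
        fun x hx y hy => jordan_V x hx y hy
    have : ((2 : ℂ)⁻¹ : ℂ) = (((2 : ℝ)⁻¹ : ℝ) : ℂ) := by norm_num
    rw [this]
    exact hsmulB _ _ hmem
  -- separation of pure states and 0 by B
  have hsepB : ∀ φ' ψ' : A →ₗ[ℂ] ℂ, (IsPureState φ' ∨ φ' = 0) → (IsPureState ψ' ∨ ψ' = 0) →
      φ' ≠ ψ' → ∃ b ∈ B, φ' b ≠ ψ' b := by
    intro φ' ψ' hφ' hψ' hne'
    rcases hφ' with hφ' | rfl
    · rcases hψ' with hψ' | rfl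
      · by_contra hcon
        push_neg at hcon
        exact hne' (hsep φ' ψ' hφ' hψ' fun a ha => hcon a (subset_closure (hCV ha)))
      · exact ⟨1, h1B, by rw [hφ'.1.1]; simp⟩
    · rcases hψ' with hψ' | rfl
      · exact ⟨1, h1B, by rw [hψ'.1.1]; simp⟩
      · exact absurd rfl hne'
  have hBeq : B = {a : A | IsSelfAdjoint a} :=
    hSW B hBsa h1B haddB hsmulB hjordanB isClosed_closure hsepB
  -- states agree on B
  have hDclosed : IsClosed {a : A | φ a = ψ a} :=
    isClosed_eq (isState_continuous hφ) (isState_continuous hψ)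
  have hVD : (V : Set A) ⊆ {a : A | φ a = ψ a} := by
    intro a ha
    induction ha using Submodule.span_induction with
    | mem x hx =>
      rcases hx with rfl | hx
      · show φ 1 = ψ 1; rw [hφ.1, hψ.1]
      · exact hagree x hx
    | zero => show φ 0 = ψ 0; simp
    | add y z _ _ hy hz => show φ (y + z) = ψ (y + z); rw [map_add, map_add, hy, hz]
    | smul r y _ hy =>
      show φ (r • y) = ψ (r • y)
      rw [← hrsmul, map_smul, map_smul]
      exact congrArg _ hy
  have hBD : B ⊆ {a : A | φ a = ψ a} := closure_minimal hVD hDclosed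
  have hsaD : ∀ a : A, IsSelfAdjoint a → φ a = ψ a := fun a ha => hBD (hBeq ▸ ha)
  ext a
  obtain ⟨h, k, hhsa, hksa, hd, -, -⟩ := exists_sa_decomp a
  rw [hd, map_add, map_add, map_smul, map_smul, hsaD h hhsa, hsaD k hksa]
end

section
/- Let n ≥ 1 and let α : ℝ² → Mₙ(ℂ) be a differentiable function such that α(p) is hermitian for every p ∈ ℝ², and such that at every point p the directional derivatives of α in the directions (1,1) and (1,−1) are positive semidefinite matrices. Then for all x = (x⁰, x¹) and y = (y⁰, y¹) in ℝ² with y⁰ − x⁰ ≥ |y¹ − x¹| (i.e. x precedes y in the causal order of the Minkowski plane), the matrix α(y) − α(x) is positive semidefinite. -/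
open scoped Matrix.Norms.L2Operator ComplexOrder

/-!
Write `y - x = a • (1, 1) + b • (1, -1)` with `a, b ≥ 0` and split `α y - α x` into the increments
along the two null legs. Along a ray `t ↦ p + t • d` whose derivative `fderiv ℝ α · d` is positive
semidefinite, each real function `t ↦ re (ξᴴ α(p + t • d) ξ)` has nonnegative derivative, hence
is monotone; for hermitian matrices these quadratic forms are real, so the increment is positive
semidefinite.
-/

open Matrix

variable {ι : Type*} [Fintype ι]

theorem Matrix.IsHermitian.posSemidef_of_re_dotProduct_mulVec_nonneg {A : Matrix ι ι ℂ}
    (hA : A.IsHermitian) (h : ∀ x, 0 ≤ (star x ⬝ᵥ A *ᵥ x).re) : A.PosSemidef :=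
  .of_dotProduct_mulVec_nonneg hA fun x ↦
    RCLike.nonneg_iff.mpr ⟨h x, hA.im_star_dotProduct_mulVec_self x⟩

variable [DecidableEq ι]

theorem HasDerivAt.dotProduct_mulVec {g : ℝ → Matrix ι ι ℂ} {g' : Matrix ι ι ℂ} {t : ℝ}
    (hg : HasDerivAt g g' t) (v w : ι → ℂ) :
    HasDerivAt (fun s ↦ v ⬝ᵥ g s *ᵥ w) (v ⬝ᵥ g' *ᵥ w) t :=
  let L : Matrix ι ι ℂ →ₗ[ℝ] ℂ :=
    { toFun A := v ⬝ᵥ A *ᵥ w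
      map_add' A B := by rw [add_mulVec, dotProduct_add]
      map_smul' c A := by rw [smul_mulVec, dotProduct_smul]; rfl }
  L.toContinuousLinearMap.hasFDerivAt.comp_hasDerivAt t hg

theorem posSemidef_sub_of_hasDerivAt {g g' : ℝ → Matrix ι ι ℂ}
    (hg : ∀ t, HasDerivAt g (g' t) t) (hherm : ∀ t, (g t).IsHermitian)
    (hg' : ∀ t, (g' t).PosSemidef) {a b : ℝ} (hab : a ≤ b) : (g b - g a).PosSemidef := by
  refine ((hherm b).sub (hherm a)).posSemidef_of_re_dotProduct_mulVec_nonneg fun x ↦ ?_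
  have hderiv (t : ℝ) : HasDerivAt (fun s ↦ (star x ⬝ᵥ g s *ᵥ x).re) (star x ⬝ᵥ g' t *ᵥ x).re t :=
    Complex.reCLM.hasFDerivAt.comp_hasDerivAt t ((hg t).dotProduct_mulVec _ _)
  have hmono : Monotone fun s ↦ (star x ⬝ᵥ g s *ᵥ x).re :=
    monotone_of_hasDerivAt_nonneg hderiv fun t ↦ (hg' t).re_dotProduct_nonneg x
  simpa [sub_mulVec, dotProduct_sub] using hmono hab

theorem posSemidef_sub_of_fderiv_posSemidef {E : Type*} [NormedAddCommGroup E] [NormedSpace ℝ E]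
    {α : E → Matrix ι ι ℂ} (hdiff : Differentiable ℝ α) (hherm : ∀ p, (α p).IsHermitian)
    {d : E} (hd : ∀ p, (fderiv ℝ α p d).PosSemidef) (x : E) {c : ℝ} (hc : 0 ≤ c) :
    (α (x + c • d) - α x).PosSemidef := by
  have hline (t : ℝ) : HasDerivAt (fun s : ℝ ↦ x + s • d) d t := by
    simpa using ((hasDerivAt_id t).smul_const d).const_add x
  simpa using posSemidef_sub_of_hasDerivAt (g := fun t ↦ α (x + t • d))
    (fun t ↦ (hdiff _).hasFDerivAt.comp_hasDerivAt t (hline t)) (fun t ↦ hherm _)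
    (fun t ↦ hd _) hc

theorem exists_null_decomposition {x y : ℝ × ℝ} (hxy : |y.2 - x.2| ≤ y.1 - x.1) :
    ∃ a b : ℝ, 0 ≤ a ∧ 0 ≤ b ∧ y = x + a • ((1 : ℝ), (1 : ℝ)) + b • ((1 : ℝ), (-1 : ℝ)) := by
  obtain ⟨h₁, h₂⟩ := abs_le.mp hxy
  refine ⟨(y.1 - x.1 + (y.2 - x.2)) / 2, (y.1 - x.1 - (y.2 - x.2)) / 2,
    by linarith, by linarith, ?_⟩
  ext <;>
    simp only [Prod.smul_mk, smul_eq_mul, mul_one, mul_neg, Prod.fst_add, Prod.snd_add] <;> ring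

theorem causal_monotone_of_null_derivatives_posSemidef_general
    (n : ℕ) (α : ℝ × ℝ → Matrix (Fin n) (Fin n) ℂ)
    (hdiff : Differentiable ℝ α)
    (hherm : ∀ p : ℝ × ℝ, (α p).IsHermitian)
    (hu : ∀ p : ℝ × ℝ, (fderiv ℝ α p (1, 1)).PosSemidef)
    (hv : ∀ p : ℝ × ℝ, (fderiv ℝ α p (1, -1)).PosSemidef)
    (x y : ℝ × ℝ) (hxy : |y.2 - x.2| ≤ y.1 - x.1) :
    (α y - α x).PosSemidef := by
  obtain ⟨a, b, ha, hb, rfl⟩ := exists_null_decomposition hxy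
  rw [← sub_add_sub_cancel _ (α (x + a • ((1 : ℝ), (1 : ℝ)))) (α x)]
  exact (posSemidef_sub_of_fderiv_posSemidef hdiff hherm hv _ hb).add
    (posSemidef_sub_of_fderiv_posSemidef hdiff hherm hu x ha)

/-- a differentiable hermitian-matrix-valued function on the Minkowski plane
whose directional derivatives along the null directions `(1,1)` and `(1,−1)` are everywhere
positive semidefinite is non-decreasing (in the Loewner order) along the causal order. -/
theorem causal_monotone_of_null_derivatives_posSemidef
    (n : ℕ) (hn : 1 ≤ n) (α : ℝ × ℝ → Matrix (Fin n) (Fin n) ℂ)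
    (hdiff : Differentiable ℝ α)
    (hherm : ∀ p : ℝ × ℝ, (α p).IsHermitian)
    (hu : ∀ p : ℝ × ℝ, (fderiv ℝ α p (1, 1)).PosSemidef)
    (hv : ∀ p : ℝ × ℝ, (fderiv ℝ α p (1, -1)).PosSemidef)
    (x y : ℝ × ℝ) (hxy : |y.2 - x.2| ≤ y.1 - x.1) :
    (α y - α x).PosSemidef :=
  causal_monotone_of_null_derivatives_posSemidef_general n α hdiff hherm hu hv x y hxy
end

section
/- Fix real numbers d₁, d₂ and let D_F = diag(d₁, d₂) ∈ M₂(ℂ). Let A ∈ M₂(ℂ) be a hermitian matrix and define α : ℝ² → M₂(ℂ) by α(x⁰, x¹) = x⁰·1 + A. Then α satisfies the causal cone condition — i.e., at every point the 4×4 matrix with blocks [2 ∂_u α, [D_F, α]; −[D_F, α], 2 ∂_v α] is positive semidefinite, where ∂_u = ½(∂₀ + ∂₁), ∂_v = ½(∂₀ − ∂₁) and [D_F, α] = D_F α − α D_F — if and only if ‖[D_F, A]‖ ≤ 1, where ‖·‖ is the operator norm on M₂(ℂ). -/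
/-!
Both directional derivatives of `α` equal `1`, and since `D_F` and `A` are hermitian the
commutator `C = [D_F, α] = [D_F, A]` is constant and skew-hermitian, so the block matrix is
`[1, C; Cᴴ, 1]`. By the Schur complement it is positive semidefinite iff `Cᴴ C ≤ 1`, and by the
C⋆-identity `‖Cᴴ C‖ = ‖C‖²` this is `‖C‖ ≤ 1`.
-/

open scoped Matrix.Norms.L2Operator ComplexOrder MatrixOrder
open Matrix

namespace Matrix

variable {n : Type*} [Fintype n] [DecidableEq n]

theorem posSemidef_one_sub_conjTranspose_mul_self_iff (C : Matrix n n ℂ) :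
    (1 - Cᴴ * C).PosSemidef ↔ ‖C‖ ≤ 1 := by
  rw [← sq_le_one_iff₀ (norm_nonneg C), sq, ← CStarRing.norm_star_mul_self,
    CStarAlgebra.norm_le_one_iff_of_nonneg _ (star_mul_self_nonneg C), le_iff,
    star_eq_conjTranspose]

theorem posSemidef_fromBlocks_one_one_iff (C : Matrix n n ℂ) :
    (fromBlocks 1 C Cᴴ 1).PosSemidef ↔ ‖C‖ ≤ 1 := by
  let _ : Invertible (1 : Matrix n n ℂ) := invertibleOne
  rw [PosDef.fromBlocks₁₁ C 1 PosDef.one, inv_one, mul_one,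
    posSemidef_one_sub_conjTranspose_mul_self_iff]

end Matrix

theorem IsSelfAdjoint.star_commutator {R : Type*} [Ring R] [StarRing R] {a b : R}
    (ha : IsSelfAdjoint a) (hb : IsSelfAdjoint b) :
    star (a * b - b * a) = -(a * b - b * a) := by
  rw [star_sub, star_mul, star_mul, ha.star_eq, hb.star_eq, neg_sub]

theorem fderiv_ofReal_fst_smul_add_const {E : Type*} [NormedAddCommGroup E] [NormedSpace ℂ E]
    (M A : E) (p v : ℝ × ℝ) :
    fderiv ℝ (fun q : ℝ × ℝ => (q.1 : ℂ) • M + A) p v = (v.1 : ℂ) • M := by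
  have : (fun q : ℝ × ℝ => (q.1 : ℂ) • M + A) =
      fun q => (ContinuousLinearMap.fst ℝ ℝ ℝ).smulRight M q + A := by
    funext q; simp [Complex.coe_smul]
  rw [this, fderiv_add_const, ContinuousLinearMap.fderiv]
  simp [Complex.coe_smul]

/-- the affine function `α(x⁰, x¹) = x⁰·1 + A` satisfies the causal-cone
block-positivity condition at every point iff `‖[D_F, A]‖ ≤ 1` in the operator norm. -/
theorem affine_in_causalCone_iff_commutator_norm_le_one (d₁ d₂ : ℝ)
    (A : Matrix (Fin 2) (Fin 2) ℂ) (hA : A.IsHermitian)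
    (DF : Matrix (Fin 2) (Fin 2) ℂ) (hDF : DF = Matrix.diagonal ![(d₁ : ℂ), (d₂ : ℂ)])
    (α : ℝ × ℝ → Matrix (Fin 2) (Fin 2) ℂ)
    (hα : α = fun p => (p.1 : ℂ) • (1 : Matrix (Fin 2) (Fin 2) ℂ) + A) :
    (∀ p : ℝ × ℝ, (Matrix.fromBlocks
        (fderiv ℝ α p (1, 1)) (DF * α p - α p * DF)
        (-(DF * α p - α p * DF)) (fderiv ℝ α p (1, -1))).PosSemidef) ↔
      ‖DF * A - A * DF‖ ≤ 1 := by
  have hDFh : DF.IsHermitian := by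
    rw [hDF, isHermitian_diagonal_iff]
    intro i
    fin_cases i <;> simp [IsSelfAdjoint]
  have hcomm : ∀ p, DF * α p - α p * DF = DF * A - A * DF := fun p => by
    simp only [hα, mul_add, add_mul, Matrix.mul_smul, Matrix.smul_mul, mul_one, one_mul]
    abel
  have hskew : -(DF * A - A * DF) = (DF * A - A * DF)ᴴ :=
    (IsSelfAdjoint.star_commutator hDFh hA).symm
  have hderiv : ∀ p v, fderiv ℝ α p v = (v.1 : ℂ) • 1 := fun p v => by
    rw [hα, fderiv_ofReal_fst_smul_add_const]
  simp only [hderiv, hcomm, hskew, Complex.ofReal_one, one_smul, forall_const]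
  exact posSemidef_fromBlocks_one_one_iff _
end
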